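/- arXiv:1801.00767 — 5 statements merged into one kernel-verified Lean document; each statement's English description precedes it below -/
import Mathlib

section
/- For compact Hausdorff spaces X and Y, the continuous-function C*-algebra of the topological join X ∗ Y is isomorphic to the algebra of continuous functions f : [0,1] → C(X) ⊗ C(Y) such that f(0) ∈ C(X) ⊗ ℂ·1 and f(1) ∈ ℂ·1 ⊗ C(Y). -/
noncomputable section

/-- The relation on `X × [0,1]` defining the unreduced cone: collapse `X × {0}`. -/
def coneRel (X : Type) : (X × unitInterval) → (X × unitInterval) → Prop :=
  fun p q => p = q ∨ (p.2 = 0 ∧ q.2 = 0)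

/-- The unreduced cone `CX = (X × [0,1]) / (X × {0})`. -/
def ConeSpace (X : Type) [TopologicalSpace X] : Type := Quot (coneRel X)

instance (X : Type) [TopologicalSpace X] : TopologicalSpace (ConeSpace X) :=
  inferInstanceAs (TopologicalSpace (Quot _))

/-- The height function `CX → ℝ` induced by `(x, t) ↦ t`. -/
def coneHeight {X : Type} [TopologicalSpace X] : ConeSpace X → ℝ :=
  Quot.lift (fun p => (p.2 : ℝ)) (by
    rintro a b (rfl | ⟨h1, h2⟩)
    · rfl
    · show ((a.2 : unitInterval) : ℝ) = ((b.2 : unitInterval) : ℝ)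
      rw [h1, h2])

/-- The relation on `X × Y × [0,1]` defining the join:
`(x, y, 1) ∼ (x', y, 1)` and `(x, y, 0) ∼ (x, y', 0)`. -/
def joinRel (X Y : Type) : (X × Y × unitInterval) → (X × Y × unitInterval) → Prop :=
  fun p q => p = q ∨ (p.2.2 = 0 ∧ q.2.2 = 0 ∧ p.1 = q.1) ∨
    (p.2.2 = 1 ∧ q.2.2 = 1 ∧ p.2.1 = q.2.1)

/-- The topological join `X ∗ Y = (X × Y × [0,1]) / ∼`. -/
def JoinSpace (X Y : Type) [TopologicalSpace X] [TopologicalSpace Y] : Type :=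
  Quot (joinRel X Y)

instance (X Y : Type) [TopologicalSpace X] [TopologicalSpace Y] :
    TopologicalSpace (JoinSpace X Y) :=
  inferInstanceAs (TopologicalSpace (Quot _))

/-- Evaluation at a point, as a star algebra homomorphism. -/
def evalSAH {X : Type} [TopologicalSpace X] (A : Type) [CStarAlgebra A] (x : X) :
    C(X, A) →⋆ₐ[ℂ] A where
  toFun f := f x
  map_one' := rfl
  map_mul' _ _ := rfl
  map_zero' := rfl
  map_add' _ _ := rfl
  commutes' _ := rfl
  map_star' _ := rfl

/-! A continuous function on `X ∗ Y` is the same as a continuous function on `X × Y × [0,1]`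
that is constant on the classes of `joinRel`; currying in the `[0,1]` variable turns these into
paths `t ↦ f t` in `C(X × Y)` whose value at `0` depends only on `x` and whose value at `1`
depends only on `y`. The passage back is continuous because evaluation `C(K, ℂ) × K → ℂ` is
jointly continuous for compact `K`. -/

open ContinuousMap

theorem ContinuousMap.continuous_eval_of_compactSpace {α β : Type*} [TopologicalSpace α]
    [CompactSpace α] [PseudoMetricSpace β] :
    Continuous fun q : C(α, β) × α => q.1 q.2 :=
  (continuous_eval (F := BoundedContinuousFunction α β)).comp <|
    (isometryEquivBoundedOfCompact α β).continuous.prodMap continuous_id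

section ProductRange

variable {X Y : Type*} [TopologicalSpace X] [TopologicalSpace Y]
  {𝕜 : Type*} [CommSemiring 𝕜] [StarRing 𝕜]
  {A : Type*} [TopologicalSpace A] [Semiring A] [IsTopologicalSemiring A] [StarRing A]
  [ContinuousStar A] [Algebra 𝕜 A] [StarModule 𝕜 A]

theorem ContinuousMap.mem_range_compStarAlgHom'_fst_iff (f : C(X × Y, A)) :
    f ∈ (compStarAlgHom' 𝕜 A (fst : C(X × Y, X))).range ↔
      ∀ x y y', f (x, y) = f (x, y') := by
  refine ⟨by rintro ⟨g, rfl⟩ x y y'; rfl, fun hf => ?_⟩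
  rcases isEmpty_or_nonempty Y with hY | ⟨⟨y₀⟩⟩
  · exact ⟨0, ext fun p => isEmptyElim p.2⟩
  · exact ⟨⟨fun x => f (x, y₀), by fun_prop⟩, ext fun p => hf p.1 y₀ p.2⟩

theorem ContinuousMap.mem_range_compStarAlgHom'_snd_iff (f : C(X × Y, A)) :
    f ∈ (compStarAlgHom' 𝕜 A (snd : C(X × Y, Y))).range ↔
      ∀ x x' y, f (x, y) = f (x', y) := by
  refine ⟨by rintro ⟨g, rfl⟩ x x' y; rfl, fun hf => ?_⟩
  rcases isEmpty_or_nonempty X with hX | ⟨⟨x₀⟩⟩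
  · exact ⟨0, ext fun p => isEmptyElim p.1⟩
  · exact ⟨⟨fun y => f (x₀, y), by fun_prop⟩, ext fun p => hf x₀ p.1 p.2⟩

end ProductRange

namespace JoinSpace

variable (X Y : Type) [TopologicalSpace X] [CompactSpace X]
  [TopologicalSpace Y] [CompactSpace Y]

abbrev functionAlgebra : StarSubalgebra ℂ C(unitInterval, C(X × Y, ℂ)) :=
  (StarSubalgebra.comap (evalSAH (C(X × Y, ℂ)) (0 : unitInterval))
      (compStarAlgHom' ℂ ℂ (⟨Prod.fst, continuous_fst⟩ : C(X × Y, X))).range) ⊓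
    (StarSubalgebra.comap (evalSAH (C(X × Y, ℂ)) (1 : unitInterval))
      (compStarAlgHom' ℂ ℂ (⟨Prod.snd, continuous_snd⟩ : C(X × Y, Y))).range)

theorem mem_functionAlgebra_iff (f : C(unitInterval, C(X × Y, ℂ))) :
    f ∈ functionAlgebra X Y ↔
      (∀ x y y', f 0 (x, y) = f 0 (x, y')) ∧ (∀ x x' y, f 1 (x, y) = f 1 (x', y)) :=
  (ContinuousMap.mem_range_compStarAlgHom'_fst_iff _).and
    (ContinuousMap.mem_range_compStarAlgHom'_snd_iff _)

def curry : C(JoinSpace X Y, ℂ) →⋆ₐ[ℂ] C(unitInterval, C(X × Y, ℂ)) where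
  toFun g := ContinuousMap.curry
    ⟨fun p => g (Quot.mk _ (p.2.1, p.2.2, p.1)),
      g.continuous.comp <| continuous_quot_mk.comp <| by fun_prop⟩
  map_one' := rfl
  map_mul' _ _ := rfl
  map_zero' := rfl
  map_add' _ _ := rfl
  commutes' _ := rfl
  map_star' _ := rfl

theorem curry_mem (g : C(JoinSpace X Y, ℂ)) : curry X Y g ∈ functionAlgebra X Y :=
  (mem_functionAlgebra_iff X Y _).2
    ⟨fun _ _ _ => congrArg g <| Quot.sound <| .inr <| .inl ⟨rfl, rfl, rfl⟩,
      fun _ _ _ => congrArg g <| Quot.sound <| .inr <| .inr ⟨rfl, rfl, rfl⟩⟩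

theorem curry_injective : Function.Injective (curry X Y) := by
  intro g g' h
  ext q
  obtain ⟨⟨x, y, t⟩, rfl⟩ := Quot.exists_rep q
  exact DFunLike.congr_fun (DFunLike.congr_fun h t) (x, y)

theorem exists_curry_eq_of_mem {f : C(unitInterval, C(X × Y, ℂ))}
    (hf : f ∈ functionAlgebra X Y) : ∃ g, curry X Y g = f := by
  obtain ⟨hf0, hf1⟩ := (mem_functionAlgebra_iff X Y f).1 hf
  let F : X × Y × unitInterval → ℂ := fun p => f p.2.2 (p.1, p.2.1)
  have hF : ∀ a b, joinRel X Y a b → F a = F b := by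
    rintro ⟨x, y, t⟩ ⟨x', y', t'⟩ (h | ⟨rfl, rfl, rfl⟩ | ⟨rfl, rfl, rfl⟩)
    · rw [h]
    · exact hf0 x y y'
    · exact hf1 x x' y
  have hFc : Continuous F := continuous_eval_of_compactSpace.comp <|
    (f.continuous.comp continuous_snd.snd).prodMk (continuous_fst.prodMk continuous_snd.fst)
  exact ⟨⟨Quot.lift F hF, continuous_quot_lift hF hFc⟩, rfl⟩

end JoinSpace

theorem functions_on_join_iso_general
    (X Y : Type) [TopologicalSpace X] [CompactSpace X]
    [TopologicalSpace Y] [CompactSpace Y] :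
    Nonempty (C(JoinSpace X Y, ℂ) ≃⋆ₐ[ℂ]
      ↥((StarSubalgebra.comap (evalSAH (C(X × Y, ℂ)) (0 : unitInterval))
          (ContinuousMap.compStarAlgHom' ℂ ℂ
            (⟨Prod.fst, continuous_fst⟩ : C(X × Y, X))).range) ⊓
        (StarSubalgebra.comap (evalSAH (C(X × Y, ℂ)) (1 : unitInterval))
          (ContinuousMap.compStarAlgHom' ℂ ℂ
            (⟨Prod.snd, continuous_snd⟩ : C(X × Y, Y))).range))) := by
  refine ⟨StarAlgEquiv.ofBijective
    ((JoinSpace.curry X Y).codRestrict (JoinSpace.functionAlgebra X Y)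
      (JoinSpace.curry_mem X Y)) ⟨?_, ?_⟩⟩
  · exact (StarAlgHom.injective_codRestrict _ _ _).2 (JoinSpace.curry_injective X Y)
  · rintro ⟨f, hf⟩
    obtain ⟨g, rfl⟩ := JoinSpace.exists_curry_eq_of_mem X Y hf
    exact ⟨g, rfl⟩

/-- For compact Hausdorff spaces `X` and `Y`, the C*-algebra `C(X ∗ Y)` of
continuous functions on the topological join is isomorphic to the algebra of continuous
functions `f : [0,1] → C(X) ⊗ C(Y)` such that `f(0) ∈ C(X) ⊗ ℂ·1` and `f(1) ∈ ℂ·1 ⊗ C(Y)`.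
(For commutative algebras the minimal C*-tensor product is `C(X) ⊗ C(Y) = C(X × Y)`, and
the subalgebras `C(X) ⊗ ℂ·1`, `ℂ·1 ⊗ C(Y)` are the pullbacks of the two projections.) -/
theorem functions_on_join_iso
    (X Y : Type) [TopologicalSpace X] [CompactSpace X] [T2Space X]
    [TopologicalSpace Y] [CompactSpace Y] [T2Space Y] :
    Nonempty (C(JoinSpace X Y, ℂ) ≃⋆ₐ[ℂ]
      ↥((StarSubalgebra.comap (evalSAH (C(X × Y, ℂ)) (0 : unitInterval))
          (ContinuousMap.compStarAlgHom' ℂ ℂ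
            (⟨Prod.fst, continuous_fst⟩ : C(X × Y, X))).range) ⊓
        (StarSubalgebra.comap (evalSAH (C(X × Y, ℂ)) (1 : unitInterval))
          (ContinuousMap.compStarAlgHom' ℂ ℂ
            (⟨Prod.snd, continuous_snd⟩ : C(X × Y, Y))).range))) :=
  functions_on_join_iso_general X Y
end
end

section
/- Let 𝔾 be a compact quantum group acting on a unital C*-algebra A via δ : A → A ⊗ C(𝔾). If the weak local-triviality dimension of δ is finite, then δ is free in the sense of Ellwood: the closed linear span of {(a ⊗ 1)δ(b) : a, b ∈ A} equals A ⊗ C(𝔾). -/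
noncomputable section

/-- A realization of a C*-tensor product of two C*-algebras `A` and `B` inside a C*-algebra
`T`: two commuting unital embeddings whose products have dense linear span.  (The continuity
of the embeddings is automatic for *-homomorphisms of C*-algebras and is recorded here as
data.) -/
structure TensorRealization (A B T : Type) [CStarAlgebra A] [CStarAlgebra B]
    [CStarAlgebra T] where
  ι₁ : A →⋆ₐ[ℂ] T
  ι₂ : B →⋆ₐ[ℂ] T
  cont₁ : Continuous ι₁
  cont₂ : Continuous ι₂
  commutes : ∀ a b, Commute (ι₁ a) (ι₂ b)
  spanDense : Dense (↑(Submodule.span ℂ {x : T | ∃ a b, x = ι₁ a * ι₂ b}) : Set T)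

/-- A compact quantum group `𝔾`, given by the unital C*-algebra `C = C(𝔾)` together with a
realization `T` of the C*-tensor product `C ⊗ C` and a comultiplication satisfying the
two-sided cancellation properties. -/
structure CQGroup (C T : Type) [CStarAlgebra C] [CStarAlgebra T] where
  tens : TensorRealization C C T
  comul : C →⋆ₐ[ℂ] T
  comul_cont : Continuous comul
  comul_injective : Function.Injective comul
  cancel_left : Dense (↑(Submodule.span ℂ {x : T | ∃ a b, x = tens.ι₁ a * comul b}) : Set T)
  cancel_right : Dense (↑(Submodule.span ℂ {x : T | ∃ a b, x = tens.ι₂ a * comul b}) : Set T)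

/-- An action of the compact quantum group `G` on a unital C*-algebra `A`, i.e. an injective
counital coaction `δ : A → A ⊗ C(𝔾)`, where `TA` is a realization of `A ⊗ C(𝔾)`. -/
structure Coaction (C T : Type) [CStarAlgebra C] [CStarAlgebra T] (G : CQGroup C T)
    (A TA : Type) [CStarAlgebra A] [CStarAlgebra TA] where
  tens : TensorRealization A C TA
  δ : A →⋆ₐ[ℂ] TA
  δ_cont : Continuous δ
  δ_injective : Function.Injective δ
  counital : Dense (↑(Submodule.span ℂ {x : TA | ∃ a b, x = tens.ι₂ a * δ b}) : Set TA)

/-- The cone `C₀((0,1]) ⊗ A ≅ C₀((0,1], A) = {f ∈ C([0,1], A) : f (0) = 0}`, as a non-unital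
star subalgebra of `C([0,1], A)`. -/
def coneIdeal (A : Type) [CStarAlgebra A] :
    NonUnitalStarSubalgebra ℂ C(unitInterval, A) where
  carrier := {f | f 0 = 0}
  add_mem' := by
    intro a b ha hb
    simp only [Set.mem_setOf_eq] at *
    simp [ha, hb]
  zero_mem' := rfl
  mul_mem' := by
    intro a b ha hb
    simp only [Set.mem_setOf_eq] at *
    simp [ha, hb]
  smul_mem' := by
    intro c f hf
    simp only [Set.mem_setOf_eq] at *
    simp [hf]
  star_mem' := by
    intro a ha
    simp only [Set.mem_setOf_eq] at *
    simp [ha]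

lemma mem_coneIdeal {A : Type} [CStarAlgebra A] {f : C(unitInterval, A)} :
    f ∈ coneIdeal A ↔ f 0 = 0 := Iff.rfl

/-- The element `t ⊗ a` of the cone `C₀((0,1]) ⊗ A`, i.e. the function `s ↦ s • a`. -/
def coneElem (A : Type) [CStarAlgebra A] (a : A) : coneIdeal A :=
  ⟨⟨fun s => ((s : ℝ) : ℂ) • a, by fun_prop⟩, by
    simp only [mem_coneIdeal, ContinuousMap.coe_mk]
    norm_num⟩

/-- Given a realization `T` of `C ⊗ C`, the element `f · (1 ⊗ g)` of the cone over `T`,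
for `f` in the cone over `C` and `g : C`. -/
def coneMulR {C T : Type} [CStarAlgebra C] [CStarAlgebra T] (G : CQGroup C T)
    (f : coneIdeal C) (g : C) : coneIdeal T :=
  ⟨⟨fun s => G.tens.ι₁ ((f : C(unitInterval, C)) s) * G.tens.ι₂ g,
      ((G.tens.cont₁.comp (f : C(unitInterval, C)).continuous).mul continuous_const)⟩, by
    simp only [mem_coneIdeal, ContinuousMap.coe_mk]
    rw [show (f : C(unitInterval, C)) 0 = 0 from f.property, map_zero, zero_mul]⟩

/-- The comultiplication applied pointwise on the cone:  the image of `f` under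
`id_{C₀((0,1])} ⊗ Δ`. -/
def coneComul {C T : Type} [CStarAlgebra C] [CStarAlgebra T] (G : CQGroup C T)
    (f : coneIdeal C) : coneIdeal T :=
  ⟨⟨fun s => G.comul ((f : C(unitInterval, C)) s),
      G.comul_cont.comp (f : C(unitInterval, C)).continuous⟩, by
    simp only [mem_coneIdeal, ContinuousMap.coe_mk]
    rw [show (f : C(unitInterval, C)) 0 = 0 from f.property, map_zero]⟩

/-- A `𝔾`-equivariant *-homomorphism `C₀((0,1]) ⊗ C(𝔾) → A`, where the equivariance is
expressed via the homomorphism `ρT = ρ ⊗ id` on the cone over `C(𝔾) ⊗ C(𝔾)`. -/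
structure EqvConeHom {C T A TA : Type} [CStarAlgebra C] [CStarAlgebra T] [CStarAlgebra A]
    [CStarAlgebra TA] (G : CQGroup C T) (ac : Coaction C T G A TA) where
  ρ : ↥(coneIdeal C) →⋆ₙₐ[ℂ] A
  ρT : ↥(coneIdeal T) →⋆ₙₐ[ℂ] TA
  compat : ∀ (f : coneIdeal C) (g : C),
    ρT (coneMulR G f g) = ac.tens.ι₁ (ρ f) * ac.tens.ι₂ g
  equivariant : ∀ f : coneIdeal C, ac.δ (ρ f) = ρT (coneComul G f)

variable {C T A TA : Type} [CStarAlgebra C] [CStarAlgebra T] [CStarAlgebra A] [CStarAlgebra TA]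

/-- Witnesses for `dim_LT ≤ d`: `d+1` equivariant cone homomorphisms which are jointly
unital, i.e. `∑ ρⱼ(t ⊗ 1) = 1`. -/
def LTWitness (G : CQGroup C T) (ac : Coaction C T G A TA) (d : ℕ) : Prop :=
  ∃ r : Fin (d + 1) → EqvConeHom G ac, (∑ j, (r j).ρ (coneElem C 1)) = 1

/-- Witnesses for `dim_WLT ≤ d`: `d+1` equivariant cone homomorphisms such that
`∑ ρⱼ(t ⊗ 1)` is invertible. -/
def WLTWitness (G : CQGroup C T) (ac : Coaction C T G A TA) (d : ℕ) : Prop :=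
  ∃ r : Fin (d + 1) → EqvConeHom G ac, IsUnit (∑ j, (r j).ρ (coneElem C 1))

/-- The local-triviality dimension of a coaction, valued in `ℕ∞`. -/
def dimLT (G : CQGroup C T) (ac : Coaction C T G A TA) : ℕ∞ :=
  sInf {e : ℕ∞ | ∃ d : ℕ, e = d ∧ LTWitness G ac d}

/-- The weak local-triviality dimension of a coaction, valued in `ℕ∞`. -/
def dimWLT (G : CQGroup C T) (ac : Coaction C T G A TA) : ℕ∞ :=
  sInf {e : ℕ∞ | ∃ d : ℕ, e = d ∧ WLTWitness G ac d}

/-- The comultiplication of a compact quantum group is a coaction of the quantum group on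
its own function algebra (the translation action). -/
def comulCoaction (G : CQGroup C T) : Coaction C T G C T where
  tens := G.tens
  δ := G.comul
  δ_cont := G.comul_cont
  δ_injective := G.comul_injective
  counital := G.cancel_right

/-- A `𝔾`-equivariant unital *-homomorphism between two `𝔾`-C*-algebras; the homomorphism
`Φ = φ ⊗ id` witnessing equivariance is part of the data (it is uniquely determined). -/
structure EqvMor {A₁ TA₁ A₂ TA₂ : Type} [CStarAlgebra A₁] [CStarAlgebra TA₁]
    [CStarAlgebra A₂] [CStarAlgebra TA₂] (G : CQGroup C T)
    (ac₁ : Coaction C T G A₁ TA₁) (ac₂ : Coaction C T G A₂ TA₂) where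
  φ : A₁ →⋆ₐ[ℂ] A₂
  Φ : TA₁ →⋆ₐ[ℂ] TA₂
  compat : ∀ a h, Φ (ac₁.tens.ι₁ a * ac₁.tens.ι₂ h) = ac₂.tens.ι₁ (φ a) * ac₂.tens.ι₂ h
  equivariant : ∀ a, ac₂.δ (φ a) = Φ (ac₁.δ a)

section Aux
set_option synthInstance.maxHeartbeats 1000000
set_option maxHeartbeats 1000000

open scoped CStarAlgebra

lemma coneIdeal_isClosed (B : Type) [CStarAlgebra B] :
    IsClosed ((coneIdeal B : NonUnitalStarSubalgebra ℂ C(unitInterval, B)) :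
      Set C(unitInterval, B)) := by
  have : ((coneIdeal B : NonUnitalStarSubalgebra ℂ C(unitInterval, B)) : Set C(unitInterval, B))
      = {f : C(unitInterval, B) | f 0 = 0} := rfl
  rw [this]
  exact isClosed_eq (continuous_eval_const 0) continuous_const

/-- The element `√t ⊗ b` of the cone. -/
def coneSqrt (B : Type) [CStarAlgebra B] (b : B) : coneIdeal B :=
  ⟨⟨fun s => ((Real.sqrt s : ℝ) : ℂ) • b, by fun_prop⟩, by
    simp only [mem_coneIdeal, ContinuousMap.coe_mk]
    norm_num⟩

lemma coneElem_sub (B : Type) [CStarAlgebra B] (y z : B) :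
    coneElem B (y - z) = coneElem B y - coneElem B z := by
  refine Subtype.ext (ContinuousMap.ext fun s => ?_)
  rw [AddSubgroupClass.coe_sub, ContinuousMap.sub_apply]
  show ((s : ℝ) : ℂ) • (y - z) = ((s : ℝ) : ℂ) • y - ((s : ℝ) : ℂ) • z
  exact smul_sub _ _ _

lemma coneElem_add (B : Type) [CStarAlgebra B] (y z : B) :
    coneElem B (y + z) = coneElem B y + coneElem B z := by
  refine Subtype.ext (ContinuousMap.ext fun s => ?_)
  rw [AddMemClass.coe_add, ContinuousMap.add_apply]
  show ((s : ℝ) : ℂ) • (y + z) = ((s : ℝ) : ℂ) • y + ((s : ℝ) : ℂ) • z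
  exact smul_add _ _ _

lemma coneElem_smul (B : Type) [CStarAlgebra B] (μ : ℂ) (y : B) :
    coneElem B (μ • y) = μ • coneElem B y := by
  refine Subtype.ext (ContinuousMap.ext fun s => ?_)
  rw [SetLike.val_smul, ContinuousMap.smul_apply]
  show ((s : ℝ) : ℂ) • (μ • y) = μ • (((s : ℝ) : ℂ) • y)
  exact smul_comm _ _ _

lemma coneElem_norm_le (B : Type) [CStarAlgebra B] (y : B) :
    ‖coneElem B y‖ ≤ ‖y‖ := by
  show ‖((coneElem B y : coneIdeal B) : C(unitInterval, B))‖ ≤ ‖y‖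
  refine ContinuousMap.norm_le _ (norm_nonneg y) |>.mpr fun s => ?_
  show ‖((s : ℝ) : ℂ) • y‖ ≤ ‖y‖
  rw [norm_smul]
  have h1 : ‖((s : ℝ) : ℂ)‖ ≤ 1 := by
    rw [Complex.norm_real, Real.norm_eq_abs, abs_of_nonneg s.2.1]
    exact s.2.2
  calc ‖((s : ℝ) : ℂ)‖ * ‖y‖ ≤ 1 * ‖y‖ := mul_le_mul_of_nonneg_right h1 (norm_nonneg y)
    _ = ‖y‖ := one_mul _

lemma coneSqrt_mul {C T : Type} [CStarAlgebra C] [CStarAlgebra T] (G : CQGroup C T)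
    (c b : C) :
    (coneMulR G (coneSqrt C c) 1) * (coneComul G (coneSqrt C b))
      = coneElem T (G.tens.ι₁ c * G.comul b) := by
  refine Subtype.ext (ContinuousMap.ext fun s => ?_)
  show (G.tens.ι₁ (((Real.sqrt s : ℝ) : ℂ) • c) * G.tens.ι₂ 1)
      * G.comul (((Real.sqrt s : ℝ) : ℂ) • b) = ((s : ℝ) : ℂ) • (G.tens.ι₁ c * G.comul b)
  rw [map_one, mul_one, map_smul, map_smul, smul_mul_assoc, mul_smul_comm, smul_smul,
    ← Complex.ofReal_mul, Real.mul_self_sqrt s.2.1]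

lemma coneMulR_one {C T : Type} [CStarAlgebra C] [CStarAlgebra T] (G : CQGroup C T)
    (h' : C) :
    coneMulR G (coneElem C 1) h' = coneElem T (G.tens.ι₂ h') := by
  refine Subtype.ext (ContinuousMap.ext fun s => ?_)
  show G.tens.ι₁ (((s : ℝ) : ℂ) • (1 : C)) * G.tens.ι₂ h' = ((s : ℝ) : ℂ) • G.tens.ι₂ h'
  rw [map_smul, map_one, smul_mul_assoc, one_mul]

end Aux

set_option synthInstance.maxHeartbeats 1000000
set_option maxHeartbeats 1000000

/-- If an action of a compact quantum group `𝔾` on a unital C*-algebra `A`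
has finite weak local-triviality dimension, then it is free in the sense of Ellwood:  the
closed linear span of `{(a ⊗ 1) δ(b) : a, b ∈ A}` is all of `A ⊗ C(𝔾)`. -/
theorem free_of_finite_dimWLT
    {C T A TA : Type} [CStarAlgebra C] [CStarAlgebra T] [CStarAlgebra A] [CStarAlgebra TA]
    (G : CQGroup C T) (ac : Coaction C T G A TA)
    (h : dimWLT G ac ≠ ⊤) :
    Dense (↑(Submodule.span ℂ {x : TA | ∃ a b : A, x = ac.tens.ι₁ a * ac.δ b}) : Set TA) := by
  classical
  -- extract a witness of finite weak local-triviality dimension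
  have hne : {e : ℕ∞ | ∃ d : ℕ, e = d ∧ WLTWitness G ac d}.Nonempty := by
    by_contra hempty
    rw [Set.not_nonempty_iff_eq_empty] at hempty
    exact h (by rw [dimWLT, hempty, sInf_empty])
  obtain ⟨e, d, -, r, hx⟩ := hne
  haveI : IsClosed ((coneIdeal T : NonUnitalStarSubalgebra ℂ C(unitInterval, T)) :
      Set C(unitInterval, T)) := coneIdeal_isClosed T
  set gens : Set TA := {x : TA | ∃ a b : A, x = ac.tens.ι₁ a * ac.δ b} with hgens
  set S' : Submodule ℂ TA := (Submodule.span ℂ gens).topologicalClosure with hS'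
  have hS'closed : IsClosed (S' : Set TA) := (Submodule.span ℂ gens).isClosed_topologicalClosure
  have hspanS' : Submodule.span ℂ gens ≤ S' := Submodule.le_topologicalClosure _
  -- the linear maps `y ↦ ρTⱼ (t ⊗ y)`
  let Φ : Fin (d + 1) → (T →ₗ[ℂ] TA) := fun j =>
    { toFun := fun y => (r j).ρT (coneElem T y)
      map_add' := fun y z => by
        show (r j).ρT (coneElem T (y + z)) = (r j).ρT (coneElem T y) + (r j).ρT (coneElem T z)
        rw [coneElem_add, map_add]
      map_smul' := fun μ y => by
        show (r j).ρT (coneElem T (μ • y)) = μ • (r j).ρT (coneElem T y)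
        rw [coneElem_smul, map_smul] }
  have Φcont : ∀ j, Continuous (Φ j) := by
    intro j
    refine (LipschitzWith.of_dist_le_mul (K := 1) fun y z => ?_).continuous
    rw [dist_eq_norm, dist_eq_norm, NNReal.coe_one, one_mul, ← map_sub (Φ j)]
    calc ‖(r j).ρT (coneElem T (y - z))‖ ≤ ‖coneElem T (y - z)‖ :=
          NonUnitalStarAlgHom.norm_apply_le _ _
      _ ≤ ‖y - z‖ := coneElem_norm_le T _
  -- `Φ j` maps all of `T` into `S'`
  have hmem : ∀ (j : Fin (d + 1)) (y : T), Φ j y ∈ S' := by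
    intro j
    have hsub : Submodule.span ℂ {x : T | ∃ a b, x = G.tens.ι₁ a * G.comul b}
        ≤ S'.comap (Φ j) := by
      rw [Submodule.span_le]
      rintro _ ⟨c, b, rfl⟩
      rw [SetLike.mem_coe, Submodule.mem_comap]
      have hkey : Φ j (G.tens.ι₁ c * G.comul b)
          = ac.tens.ι₁ ((r j).ρ (coneSqrt C c)) * ac.δ ((r j).ρ (coneSqrt C b)) := by
        show (r j).ρT (coneElem T (G.tens.ι₁ c * G.comul b)) = _
        rw [← coneSqrt_mul G c b, map_mul, (r j).compat (coneSqrt C c) 1, map_one, mul_one,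
          ← (r j).equivariant]
      rw [hkey]
      exact hspanS' (Submodule.subset_span ⟨_, _, rfl⟩)
    have hclosed : IsClosed ((S'.comap (Φ j) : Submodule ℂ T) : Set T) :=
      hS'closed.preimage (Φcont j)
    intro y
    have huniv : (Set.univ : Set T) ⊆ ((S'.comap (Φ j) : Submodule ℂ T) : Set T) := by
      rw [← G.cancel_left.closure_eq]
      exact closure_minimal hsub hclosed
    exact huniv (Set.mem_univ y)
  -- hence `ι₁ x * ι₂ h' ∈ S'` for the invertible element `x`
  have hx2 : ∀ h' : C,
      ac.tens.ι₁ (∑ j, (r j).ρ (coneElem C 1)) * ac.tens.ι₂ h' ∈ S' := by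
    intro h'
    have hjs : ∀ j : Fin (d + 1),
        Φ j (G.tens.ι₂ h') = ac.tens.ι₁ ((r j).ρ (coneElem C 1)) * ac.tens.ι₂ h' := by
      intro j
      show (r j).ρT (coneElem T (G.tens.ι₂ h')) = _
      rw [← coneMulR_one G h', (r j).compat]
    rw [map_sum, Finset.sum_mul]
    refine Submodule.sum_mem _ fun j _ => ?_
    rw [← hjs j]
    exact hmem j _
  -- `S'` is stable under left multiplication by `ι₁ a`
  have hleft : ∀ (a : A), ∀ z ∈ S', ac.tens.ι₁ a * z ∈ S' := by
    intro a
    have hsub : Submodule.span ℂ gens ≤ S'.comap (LinearMap.mulLeft ℂ (ac.tens.ι₁ a)) := by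
      rw [Submodule.span_le]
      rintro _ ⟨a', b, rfl⟩
      rw [SetLike.mem_coe, Submodule.mem_comap, LinearMap.mulLeft_apply]
      rw [← mul_assoc, ← map_mul]
      exact hspanS' (Submodule.subset_span ⟨_, _, rfl⟩)
    have hclosed : IsClosed ((S'.comap (LinearMap.mulLeft ℂ (ac.tens.ι₁ a)) :
        Submodule ℂ TA) : Set TA) :=
      hS'closed.preimage (continuous_mul_left (ac.tens.ι₁ a))
    intro z hz
    have : (S' : Set TA) ⊆ ((S'.comap (LinearMap.mulLeft ℂ (ac.tens.ι₁ a)) :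
        Submodule ℂ TA) : Set TA) := by
      rw [hS', Submodule.topologicalClosure_coe]
      exact closure_minimal hsub hclosed
    exact this hz
  -- all elementary tensors `ι₁ a * ι₂ h'` lie in `S'`
  have hall : ∀ (a : A) (h' : C), ac.tens.ι₁ a * ac.tens.ι₂ h' ∈ S' := by
    intro a h'
    obtain ⟨u, hu⟩ := hx
    have hinv : (↑u⁻¹ : A) * (∑ j, (r j).ρ (coneElem C 1)) = 1 := by
      rw [← hu]; exact u.inv_mul
    have hfac : ac.tens.ι₁ a * ac.tens.ι₂ h'
        = ac.tens.ι₁ (a * ↑u⁻¹)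
          * (ac.tens.ι₁ (∑ j, (r j).ρ (coneElem C 1)) * ac.tens.ι₂ h') := by
      rw [← mul_assoc, ← map_mul, mul_assoc a _ _, hinv, mul_one]
    rw [hfac]
    exact hleft _ _ (hx2 h')
  -- conclude density
  have hle : Submodule.span ℂ {x : TA | ∃ a b, x = ac.tens.ι₁ a * ac.tens.ι₂ b} ≤ S' := by
    rw [Submodule.span_le]
    rintro _ ⟨a, b, rfl⟩
    exact hall a b
  rw [dense_iff_closure_eq]
  apply Set.eq_univ_of_univ_subset
  calc (Set.univ : Set TA)
      = closure (↑(Submodule.span ℂ {x : TA | ∃ a b, x = ac.tens.ι₁ a * ac.tens.ι₂ b}) :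
          Set TA) := (ac.tens.spanDense.closure_eq).symm
    _ ⊆ closure (S' : Set TA) := closure_mono hle
    _ = (S' : Set TA) := hS'closed.closure_eq
    _ = closure (↑(Submodule.span ℂ gens) : Set TA) := by
        rw [hS', Submodule.topologicalClosure_coe]
end
end

section
/- There is no ℤ/2ℤ-equivariant unital *-homomorphism from C(S¹) (with the antipodal action) to the free sphere algebra C(S¹_+); consequently the strong local-triviality dimension of the antipodal ℤ/2ℤ-action on C(S¹_+) is at least 2. -/
/-!
Let `u` be the image of the generator `z` of `C(S¹)`: it is invertible and `σ u = -u`. Its image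
`h` under the abelianization `C(S¹₊) → C(S¹)` is then an odd nowhere-vanishing function, so its
winding number is odd. On the other hand, a path of representations of `C(S¹₊)` on `ℂ²`, indexed
by the circle, joins two copies of the abelianization to a representation that does not depend on
the point of the circle. Taking determinants, `h²` is null-homotopic in `ℂ \ {0}`, so its winding
number `2 · deg h` vanishes.
-/

section Winding

open Complex

theorem exists_continuous_exp_eq_of_ne_zero {A : Type*} [TopologicalSpace A]
    [SimplyConnectedSpace A] [LocallyPathConnectedSpace A] {f : A → ℂ} (hf : Continuous f)
    (hf₀ : ∀ a, f a ≠ 0) : ∃ L : A → ℂ, Continuous L ∧ ∀ a, exp (L a) = f a := by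
  obtain ⟨a₀⟩ := PathConnectedSpace.nonempty (X := A)
  obtain ⟨L, -, hL⟩ := (isCoveringMapOn_exp.existsUnique_continuousMap_lifts ⟨f, hf⟩
    (exp_log (hf₀ a₀)) hf₀).exists
  exact ⟨L, L.continuous, congrFun hL⟩

theorem eq_of_forall_exp_eq {A : Type*} [TopologicalSpace A] [PreconnectedSpace A] {g : A → ℂ}
    (hg : Continuous g) {c : ℂ} (hc : ∀ a, exp (g a) = c) (a a' : A) : g a = g a' :=
  isCoveringMap_exp.const_of_comp hg (fun a a' ↦ Subtype.ext ((hc a).trans (hc a').symm)) a a'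

theorem AddCircle.lift_add_period_eq_of_nullhomotopy_sq {T : ℝ} {h : AddCircle T → ℂ}
    {ℓ : ℝ → ℂ} (hℓ : Continuous ℓ) (hℓ_exp : ∀ x, exp (ℓ x) = h x)
    {F : unitInterval × AddCircle T → ℂ} (hF : Continuous F) (hF₀ : ∀ q, F q ≠ 0)
    (hF_zero : ∀ p, F (0, p) = h p ^ 2) (hF_one : ∀ p, F (1, p) = F (1, 0)) : ℓ T = ℓ 0 := by
  have hmk : Continuous ((↑) : ℝ → AddCircle T) := AddCircle.continuous_mk' T
  set G : ℝ × ℝ → ℂ := fun v ↦ F (Set.projIcc 0 1 zero_le_one v.1, v.2)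
  obtain ⟨L, hL, hL_exp⟩ := exists_continuous_exp_eq_of_ne_zero (f := G)
    (hF.comp ((continuous_projIcc.comp continuous_fst).prodMk (hmk.comp continuous_snd)))
    (fun _ ↦ hF₀ _)
  have hG_zero : ∀ x, G (0, x) = h x ^ 2 := fun x ↦ by
    simp only [G, Set.projIcc_left]
    exact hF_zero x
  have hG_one : ∀ x, G (1, x) = G (1, 0) := fun x ↦ by
    simp only [G, Set.projIcc_right, QuotientAddGroup.mk_zero]
    exact hF_one x
  have h_period : L (0, T) - L (0, 0) = L (1, T) - L (1, 0) := by
    simpa using eq_of_forall_exp_eq (g := fun v ↦ L (v.1, v.2 + T) - L v) (c := 1) (by fun_prop)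
      (fun v ↦ by rw [exp_sub, hL_exp, hL_exp, div_eq_one_iff_eq (hF₀ _)]; simp [G]) (0, 0) (1, 0)
  have h_start : L (0, T) - L (0, 0) = 2 * (ℓ T - ℓ 0) := by
    have := eq_of_forall_exp_eq (g := fun x ↦ L (0, x) - 2 * ℓ x) (c := 1) (by fun_prop)
      (fun x ↦ by rw [exp_sub, hL_exp, hG_zero, two_mul, exp_add, hℓ_exp, ← sq,
        div_self (hF_zero x ▸ hF₀ (0, x))]) T 0
    linear_combination this
  have h_end : L (1, T) = L (1, 0) :=
    eq_of_forall_exp_eq (g := fun x ↦ L (1, x)) (by fun_prop) (fun x ↦ by rw [hL_exp, hG_one]) T 0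
  linear_combination (h_start.symm.trans h_period + congrArg (· - L (1, 0)) h_end) / 2

theorem AddCircle.no_nullhomotopy_sq_of_odd {T : ℝ} {h : AddCircle T → ℂ} (hh : Continuous h)
    (hodd : ∀ p, h (p + ↑(T / 2)) = -h p) {F : unitInterval × AddCircle T → ℂ}
    (hF : Continuous F) (hF₀ : ∀ q, F q ≠ 0) (hF_zero : ∀ p, F (0, p) = h p ^ 2)
    (hF_one : ∀ p, F (1, p) = F (1, 0)) : False := by
  have hh₀ : ∀ p, h p ≠ 0 := fun p hp ↦ hF₀ (0, p) (by simp [hF_zero, hp])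
  obtain ⟨ℓ, hℓ, hℓ_exp⟩ := exists_continuous_exp_eq_of_ne_zero (f := fun x : ℝ ↦ h x)
    (hh.comp (AddCircle.continuous_mk' T)) (fun x ↦ hh₀ x)
  have h_half_exp : ∀ x, exp (ℓ (x + T / 2) - ℓ x) = -1 := fun x ↦ by
    rw [exp_sub, hℓ_exp, hℓ_exp, QuotientAddGroup.mk_add, hodd, neg_div, div_self (hh₀ _)]
  have h_half := eq_of_forall_exp_eq (by fun_prop) h_half_exp (T / 2) 0
  have h_period := lift_add_period_eq_of_nullhomotopy_sq hℓ hℓ_exp hF hF₀ hF_zero hF_one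
  have h_half_zero : ℓ (T / 2) - ℓ 0 = 0 := by
    simp only [add_halves, zero_add] at h_half
    linear_combination (h_period - h_half) / 2
  have h_contra := h_half_exp 0
  rw [zero_add, h_half_zero, exp_zero] at h_contra
  norm_num at h_contra

end Winding

noncomputable section CircleCoordinates

def circleRe : C(AddCircle (1 : ℝ), ℂ) := ⟨fun p ↦ ((fourier 1 p).re : ℂ), by fun_prop⟩

def circleIm : C(AddCircle (1 : ℝ), ℂ) := ⟨fun p ↦ ((fourier 1 p).im : ℂ), by fun_prop⟩

lemma isSelfAdjoint_circleRe : IsSelfAdjoint circleRe := by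
  ext p
  simp [circleRe]

lemma isSelfAdjoint_circleIm : IsSelfAdjoint circleIm := by
  ext p
  simp [circleIm]

lemma re_sq_add_im_sq_fourier {T : ℝ} (n : ℤ) (p : AddCircle T) :
    (fourier n p).re ^ 2 + (fourier n p).im ^ 2 = 1 := by
  rw [sq, sq, ← Complex.normSq_apply, fourier_apply, Circle.normSq_coe]

lemma circleRe_sq_add_circleIm_sq : circleRe ^ 2 + circleIm ^ 2 = 1 := by
  ext p
  simp only [circleRe, circleIm, ContinuousMap.add_apply, ContinuousMap.pow_apply,
    ContinuousMap.coe_mk, ContinuousMap.one_apply]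
  exact_mod_cast re_sq_add_im_sq_fourier 1 p

lemma fourier_one_add_half {T : ℝ} (hT : 0 < T) (p : AddCircle T) :
    fourier 1 (p + ((T / 2 : ℝ) : AddCircle T)) = -fourier 1 p := by
  simpa using fourier_add_half_inv_index one_ne_zero hT p

lemma isUnit_fourier {T : ℝ} (n : ℤ) : IsUnit (fourier n : C(AddCircle T, ℂ)) :=
  (ContinuousMap.isUnit_iff_forall_ne_zero _).mpr fun p ↦ by simp [fourier_apply]

end CircleCoordinates

noncomputable section MatrixSphere

/- With `A = max c 0`, `B = s`, `C = max (-c) 0` (so that `A² + B² + C² = 1` and `A C = 0`) and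
the Pauli matrices `X`, `Z`, the two matrices below are `A a • 1 + B b • Z + C • X` and
`A b • 1 - B a • Z`. As `(c, s)` runs from `(1, 0)` to `(-1, 0)` they move the scalar pair `(a, b)`
to the pair `(X, 0)`. -/
def sphereMatrix₀ (c s a b : ℝ) : Matrix (Fin 2) (Fin 2) ℂ :=
  !![↑(max c 0 * a + s * b), ↑(max (-c) 0); ↑(max (-c) 0), ↑(max c 0 * a - s * b)]

def sphereMatrix₁ (c s a b : ℝ) : Matrix (Fin 2) (Fin 2) ℂ :=
  !![↑(max c 0 * b - s * a), 0; 0, ↑(max c 0 * b + s * a)]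

lemma isSelfAdjoint_sphereMatrix₀ (c s a b : ℝ) : IsSelfAdjoint (sphereMatrix₀ c s a b) := by
  ext i j
  fin_cases i <;> fin_cases j <;> simp [sphereMatrix₀, Matrix.star_apply]

lemma isSelfAdjoint_sphereMatrix₁ (c s a b : ℝ) : IsSelfAdjoint (sphereMatrix₁ c s a b) := by
  ext i j
  fin_cases i <;> fin_cases j <;> simp [sphereMatrix₁, Matrix.star_apply]

lemma sphereMatrix₀_sq_add_sphereMatrix₁_sq {c s a b : ℝ} (hcs : c ^ 2 + s ^ 2 = 1)
    (hab : a ^ 2 + b ^ 2 = 1) : sphereMatrix₀ c s a b ^ 2 + sphereMatrix₁ c s a b ^ 2 = 1 := by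
  have hAC : max c 0 * max (-c) 0 = 0 := by rcases le_total c 0 with h | h <;> simp [h]
  have hA_sq_add_C_sq : max c 0 ^ 2 + max (-c) 0 ^ 2 = c ^ 2 := by
    rcases le_total c 0 with h | h <;> simp [h]
  ext i j
  fin_cases i <;> fin_cases j <;> simp [sq, sphereMatrix₀, sphereMatrix₁] <;> norm_cast
  · linear_combination (max c 0 ^ 2 + s ^ 2) * hab + hA_sq_add_C_sq + hcs
  · linear_combination 2 * a * hAC
  · linear_combination 2 * a * hAC
  · linear_combination (max c 0 ^ 2 + s ^ 2) * hab + hA_sq_add_C_sq + hcs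

lemma sphereMatrix₀_one_zero (a b : ℝ) : sphereMatrix₀ 1 0 a b = (a : ℂ) • 1 := by
  ext i j
  fin_cases i <;> fin_cases j <;> simp [sphereMatrix₀]

lemma sphereMatrix₁_one_zero (a b : ℝ) : sphereMatrix₁ 1 0 a b = (b : ℂ) • 1 := by
  ext i j
  fin_cases i <;> fin_cases j <;> simp [sphereMatrix₁]

lemma sphereMatrix₀_neg_one_zero (a b : ℝ) : sphereMatrix₀ (-1) 0 a b = !![0, 1; 1, 0] := by
  simp [sphereMatrix₀]

lemma sphereMatrix₁_neg_one_zero (a b : ℝ) : sphereMatrix₁ (-1) 0 a b = 0 := by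
  ext i j
  fin_cases i <;> fin_cases j <;> simp [sphereMatrix₁]

lemma Matrix.det_algebraMap {n R : Type*} [Fintype n] [DecidableEq n] [CommRing R] (z : R) :
    (algebraMap R (Matrix n n R) z).det = z ^ Fintype.card n := by
  simp [Algebra.algebraMap_eq_smul_one]

def sphereHomotopy₀ : C(unitInterval × AddCircle (1 : ℝ), Matrix (Fin 2) (Fin 2) ℂ) :=
  ⟨fun q ↦ sphereMatrix₀ (Real.cos (Real.pi * q.1)) (Real.sin (Real.pi * q.1))
    (fourier 1 q.2).re (fourier 1 q.2).im, by unfold sphereMatrix₀; fun_prop⟩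

def sphereHomotopy₁ : C(unitInterval × AddCircle (1 : ℝ), Matrix (Fin 2) (Fin 2) ℂ) :=
  ⟨fun q ↦ sphereMatrix₁ (Real.cos (Real.pi * q.1)) (Real.sin (Real.pi * q.1))
    (fourier 1 q.2).re (fourier 1 q.2).im, by unfold sphereMatrix₁; fun_prop⟩

lemma isSelfAdjoint_sphereHomotopy₀ : IsSelfAdjoint sphereHomotopy₀ := by
  ext1 q
  exact isSelfAdjoint_sphereMatrix₀ _ _ _ _

lemma isSelfAdjoint_sphereHomotopy₁ : IsSelfAdjoint sphereHomotopy₁ := by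
  ext1 q
  exact isSelfAdjoint_sphereMatrix₁ _ _ _ _

lemma sphereHomotopy₀_sq_add_sphereHomotopy₁_sq :
    sphereHomotopy₀ ^ 2 + sphereHomotopy₁ ^ 2 = 1 := by
  ext1 q
  exact sphereMatrix₀_sq_add_sphereMatrix₁_sq (Real.cos_sq_add_sin_sq _)
    (re_sq_add_im_sq_fourier 1 _)

lemma sphereHomotopy₀_zero (p : AddCircle (1 : ℝ)) : sphereHomotopy₀ (0, p) = circleRe p • 1 := by
  simp [sphereHomotopy₀, sphereMatrix₀_one_zero, circleRe]

lemma sphereHomotopy₁_zero (p : AddCircle (1 : ℝ)) : sphereHomotopy₁ (0, p) = circleIm p • 1 := by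
  simp [sphereHomotopy₁, sphereMatrix₁_one_zero, circleIm]

lemma sphereHomotopy₀_one (p : AddCircle (1 : ℝ)) : sphereHomotopy₀ (1, p) = !![0, 1; 1, 0] := by
  simp [sphereHomotopy₀, sphereMatrix₀_neg_one_zero]

lemma sphereHomotopy₁_one (p : AddCircle (1 : ℝ)) : sphereHomotopy₁ (1, p) = 0 := by
  simp [sphereHomotopy₁, sphereMatrix₁_neg_one_zero]

end MatrixSphere

def IsUniversalSpherePair {S : Type} [CStarAlgebra S] (x₀ x₁ : S) : Prop :=
  ∀ (D : Type) [CStarAlgebra D] (y₀ y₁ : D), IsSelfAdjoint y₀ → IsSelfAdjoint y₁ →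
    y₀ ^ 2 + y₁ ^ 2 = 1 → ∃! φ : S →⋆ₐ[ℂ] D, φ x₀ = y₀ ∧ φ x₁ = y₁

namespace IsUniversalSpherePair

open scoped Matrix.Norms.L2Operator

variable {S : Type} [CStarAlgebra S] {x₀ x₁ : S}

lemma hom_ext (hu : IsUniversalSpherePair x₀ x₁) (h₀ : IsSelfAdjoint x₀)
    (h₁ : IsSelfAdjoint x₁) (hsum : x₀ ^ 2 + x₁ ^ 2 = 1) {D : Type} [CStarAlgebra D]
    {ψ ψ' : S →⋆ₐ[ℂ] D} (e₀ : ψ x₀ = ψ' x₀) (e₁ : ψ x₁ = ψ' x₁) : ψ = ψ' :=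
  (hu D _ _ (h₀.map ψ') (h₁.map ψ')
    (by rw [← map_pow, ← map_pow, ← map_add, hsum, map_one])).unique ⟨e₀, e₁⟩ ⟨rfl, rfl⟩

lemma apply_add_half_of_antipodal (hu : IsUniversalSpherePair x₀ x₁) (h₀ : IsSelfAdjoint x₀)
    (h₁ : IsSelfAdjoint x₁) (hsum : x₀ ^ 2 + x₁ ^ 2 = 1) {ρ : S →⋆ₐ[ℂ] C(AddCircle (1 : ℝ), ℂ)}
    (hρ₀ : ρ x₀ = circleRe) (hρ₁ : ρ x₁ = circleIm) {σ : S →⋆ₐ[ℂ] S} (hσ₀ : σ x₀ = -x₀)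
    (hσ₁ : σ x₁ = -x₁) {a : S} (ha : σ a = -a) (p : AddCircle (1 : ℝ)) :
    ρ a (p + ((1 / 2 : ℝ) : AddCircle (1 : ℝ))) = -ρ a p := by
  have hρσ : ρ.comp σ = (ContinuousMap.compStarAlgHom' ℂ ℂ
      (ContinuousMap.addRight ((1 / 2 : ℝ) : AddCircle (1 : ℝ)))).comp ρ :=
    hu.hom_ext h₀ h₁ hsum
      (by
        ext p
        change ρ (σ x₀) p = ρ x₀ (p + ((1 / 2 : ℝ) : AddCircle (1 : ℝ)))
        simp only [hσ₀, map_neg, hρ₀, ContinuousMap.neg_apply, circleRe, ContinuousMap.coe_mk,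
          fourier_one_add_half one_pos, Complex.neg_re, Complex.ofReal_neg])
      (by
        ext p
        change ρ (σ x₁) p = ρ x₁ (p + ((1 / 2 : ℝ) : AddCircle (1 : ℝ)))
        simp only [hσ₁, map_neg, hρ₁, ContinuousMap.neg_apply, circleIm, ContinuousMap.coe_mk,
          fourier_one_add_half one_pos, Complex.neg_im, Complex.ofReal_neg])
  simpa [ha] using (congr($hρσ a p)).symm

lemma exists_nullhomotopy_sq_of_isUnit (hu : IsUniversalSpherePair x₀ x₁) (h₀ : IsSelfAdjoint x₀)
    (h₁ : IsSelfAdjoint x₁) (hsum : x₀ ^ 2 + x₁ ^ 2 = 1) {ρ : S →⋆ₐ[ℂ] C(AddCircle (1 : ℝ), ℂ)}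
    (hρ₀ : ρ x₀ = circleRe) (hρ₁ : ρ x₁ = circleIm) {a : S} (ha : IsUnit a) :
    ∃ F : unitInterval × AddCircle (1 : ℝ) → ℂ, Continuous F ∧ (∀ q, F q ≠ 0) ∧
      (∀ p, F (0, p) = ρ a p ^ 2) ∧ ∀ p, F (1, p) = F (1, 0) := by
  obtain ⟨Φ, hΦ₀, hΦ₁⟩ := (hu _ _ _ isSelfAdjoint_sphereHomotopy₀ isSelfAdjoint_sphereHomotopy₁
    sphereHomotopy₀_sq_add_sphereHomotopy₁_sq).exists
  refine ⟨fun q ↦ (Φ a q).det, (Φ a).continuous.matrix_det, fun q ↦ ?_, fun p ↦ ?_, fun p ↦ ?_⟩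
  · exact ((Matrix.isUnit_iff_isUnit_det _).mp
      ((ContinuousMap.isUnit_iff_forall_isUnit _).mp (ha.map Φ) q)).ne_zero
  · have h_start : (ContinuousMap.compStarAlgHom' ℂ _ ⟨fun p ↦ (0, p), by fun_prop⟩).comp Φ =
        (ContinuousMap.compStarAlgHom _ (StarAlgHom.ofId ℂ _) (continuous_algebraMap ℂ _)).comp ρ :=
      hu.hom_ext h₀ h₁ hsum
        (by
          ext1 p
          change Φ x₀ (0, p) = StarAlgHom.ofId ℂ _ (ρ x₀ p)
          rw [hΦ₀, hρ₀, sphereHomotopy₀_zero]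
          exact (Algebra.algebraMap_eq_smul_one _).symm)
        (by
          ext1 p
          change Φ x₁ (0, p) = StarAlgHom.ofId ℂ _ (ρ x₁ p)
          rw [hΦ₁, hρ₁, sphereHomotopy₁_zero]
          exact (Algebra.algebraMap_eq_smul_one _).symm)
    have h_scalar : Φ a (0, p) = StarAlgHom.ofId ℂ _ (ρ a p) := congr($h_start a p)
    show (Φ a (0, p)).det = _
    rw [h_scalar]
    exact (Matrix.det_algebraMap _).trans (by rw [Fintype.card_fin])
  · have h_end : (ContinuousMap.compStarAlgHom' ℂ _ ⟨fun p ↦ (1, p), by fun_prop⟩).comp Φ =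
        (ContinuousMap.compStarAlgHom' ℂ _ (ContinuousMap.const _ (1, 0))).comp Φ :=
      hu.hom_ext h₀ h₁ hsum
        (by ext1 p; simp [hΦ₀, sphereHomotopy₀_one])
        (by ext1 p; simp [hΦ₁, sphereHomotopy₁_one])
    simpa using congr(($h_end a p).det)

end IsUniversalSpherePair

/-- There is no `ℤ/2ℤ`-equivariant unital *-homomorphism from `C(S¹)`
(with the antipodal action, i.e. rotation by half a period on `S¹ = ℝ/ℤ`) to the free
sphere algebra `C(S¹₊)`; consequently the strong local-triviality dimension of the
antipodal `ℤ/2ℤ`-action on `C(S¹₊)` is at least `2` (since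
`C(E₁^Δ ℤ/2ℤ) ≅ C(S¹)` equivariantly, the nonexistence of such a homomorphism is exactly
the statement `dim_SLT > 1`).

Here `S` is the universal unital C*-algebra generated by self-adjoint `x₀, x₁` with
`x₀² + x₁² = 1`, `σ` is the antipodal automorphism `xᵢ ↦ -xᵢ`, and the antipodal action on
`C(S¹) = C(ℝ/ℤ, ℂ)` is precomposition with the translation `t ↦ t + 1/2`. -/
theorem no_equivariant_hom_circle_to_free_circle
    (S : Type) [CStarAlgebra S] (x₀ x₁ : S)
    (h₀ : IsSelfAdjoint x₀) (h₁ : IsSelfAdjoint x₁) (hsum : x₀ ^ 2 + x₁ ^ 2 = 1)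
    (huniv : ∀ (D : Type) [CStarAlgebra D] (y₀ y₁ : D), IsSelfAdjoint y₀ →
      IsSelfAdjoint y₁ → y₀ ^ 2 + y₁ ^ 2 = 1 →
      ∃! φ : S →⋆ₐ[ℂ] D, φ x₀ = y₀ ∧ φ x₁ = y₁)
    (σ : S ≃⋆ₐ[ℂ] S) (hσ₀ : σ x₀ = -x₀) (hσ₁ : σ x₁ = -x₁) :
    ¬∃ φ : C(AddCircle (1 : ℝ), ℂ) →⋆ₐ[ℂ] S,
      ∀ f : C(AddCircle (1 : ℝ), ℂ),
        φ (ContinuousMap.compStarAlgHom' ℂ ℂ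
            ⟨fun t => t + ((1 / 2 : ℝ) : AddCircle (1 : ℝ)), by continuity⟩ f) =
          σ (φ f) := by
  rintro ⟨φ, hφ⟩
  have hu : IsUniversalSpherePair x₀ x₁ := huniv
  obtain ⟨ρ, hρ₀, hρ₁⟩ :=
    (hu _ _ _ isSelfAdjoint_circleRe isSelfAdjoint_circleIm circleRe_sq_add_circleIm_sq).exists
  have hσu : σ (φ (fourier 1)) = -φ (fourier 1) := by
    rw [← hφ, ← map_neg]
    congr 1
    ext p
    exact fourier_one_add_half one_pos p
  obtain ⟨F, hF, hF₀, hF_zero, hF_one⟩ :=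
    hu.exists_nullhomotopy_sq_of_isUnit h₀ h₁ hsum hρ₀ hρ₁ ((isUnit_fourier 1).map φ)
  exact AddCircle.no_nullhomotopy_sq_of_odd (ρ _).continuous
    (hu.apply_add_half_of_antipodal h₀ h₁ hsum hρ₀ hρ₁ (σ := σ) hσ₀ hσ₁ hσu) hF hF₀ hF_zero hF_one
end

section
/- Let G be a compact Hausdorff group acting continuously and freely on a compact Hausdorff space X. If the covering dimension of X/G is at most d, then the Schwarz genus of X is at most d: any finite cover of X/G by trivializing open sets can be refined and regrouped into at most d+1 disjoint families of trivializing open sets, each of whose unions is trivializing. -/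
/-!
Refine a finite cover of `X/G` by trivializing sets to a cover whose members fall into `d + 1`
colour classes of pairwise disjoint open sets. Subsets of trivializing sets are trivializing, and
the equivariant maps `π⁻¹(V) → G` on the members of one colour class glue to one on their union,
because disjoint open sets impose no compatibility condition.
-/

noncomputable section

/-- An open set `V ⊆ X/G` is *trivializing* for the quotient map `π : X → X/G` when there
is a continuous `G`-equivariant map `π⁻¹(V) → G` (equivalently, a `G`-equivariant
homeomorphism `π⁻¹(V) ≅ V × G` over `V`). -/
def Trivializing (G X : Type) [TopologicalSpace G] [Group G] [TopologicalSpace X]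
    [MulAction G X] (V : Set (Quotient (MulAction.orbitRel G X))) : Prop :=
  ∃ f : C({x : X // Quotient.mk (MulAction.orbitRel G X) x ∈ V}, G),
    ∀ (g : G) (x : X) (hx : Quotient.mk (MulAction.orbitRel G X) x ∈ V)
      (hgx : Quotient.mk (MulAction.orbitRel G X) (g • x) ∈ V),
      f ⟨g • x, hgx⟩ = g * f ⟨x, hx⟩

open Function Topology

namespace Trivializing

variable {G X : Type} [TopologicalSpace G] [Group G] [TopologicalSpace X] [MulAction G X]

lemma mono {U V : Set (Quotient (MulAction.orbitRel G X))} (hU : Trivializing G X U)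
    (hVU : V ⊆ U) : Trivializing G X V :=
  let ⟨f, hf⟩ := hU
  ⟨f.comp ⟨fun x => ⟨x.1, hVU x.2⟩, by fun_prop⟩, fun g x hx hgx => hf g x (hVU hx) (hVU hgx)⟩

lemma iUnion {ι : Type*} {V : ι → Set (Quotient (MulAction.orbitRel G X))}
    (hV : ∀ i, IsOpen (V i)) (hdisj : Pairwise (Disjoint on V))
    (htriv : ∀ i, Trivializing G X (V i)) : Trivializing G X (⋃ i, V i) := by
  choose f hf using htriv
  let T (i : ι) : Set {x : X // Quotient.mk _ x ∈ ⋃ i, V i} := {y | Quotient.mk _ y.1 ∈ V i}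
  let φ (i : ι) : C(T i, G) := (f i).comp ⟨fun y => ⟨y.1.1, y.2⟩, by fun_prop⟩
  have agree : ∀ i j y (hi : y ∈ T i) (hj : y ∈ T j), φ i ⟨y, hi⟩ = φ j ⟨y, hj⟩ := by
    intro i j y hi hj
    obtain rfl : i = j := hdisj.eq (Set.not_disjoint_iff.2 ⟨_, hi, hj⟩)
    rfl
  have T_mem_nhds : ∀ y, ∃ i, T i ∈ 𝓝 y := fun y =>
    (Set.mem_iUnion.1 y.2).imp fun i hi =>
      ((hV i).preimage (continuous_quotient_mk'.comp continuous_subtype_val)).mem_nhds hi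
  let F := ContinuousMap.liftCover T φ agree T_mem_nhds
  have F_eq : ∀ i y (hy : y ∈ T i), F y = f i ⟨y.1, hy⟩ := fun i y hy =>
    ContinuousMap.liftCover_coe (i := i) ⟨y, hy⟩
  refine ⟨F, fun g x hx hgx => ?_⟩
  obtain ⟨i, hi⟩ := Set.mem_iUnion.1 hx
  have hgi : Quotient.mk _ (g • x) ∈ V i := by
    rwa [MulAction.orbitRel.Quotient.quotient_smul_eq]
  rw [F_eq i ⟨g • x, hgx⟩ hgi, F_eq i ⟨x, hx⟩ hi]
  exact hf i g x hi hgi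

end Trivializing

theorem genus_le_covering_dimension_general
    (G : Type) [TopologicalSpace G] [Group G]
    (X : Type) [TopologicalSpace X]
    [MulAction G X]
    (d : ℕ)
    (hdim : ∀ (m : ℕ) (U : Fin m → Set (Quotient (MulAction.orbitRel G X))),
      (∀ i, IsOpen (U i)) → (⋃ i, U i) = Set.univ →
      ∃ (m' : ℕ) (V : Fin m' → Set (Quotient (MulAction.orbitRel G X)))
        (c : Fin m' → Fin (d + 1)),
        (∀ j, IsOpen (V j)) ∧ (⋃ j, V j) = Set.univ ∧
        (∀ j, ∃ i, V j ⊆ U i) ∧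
        (∀ j k, j ≠ k → c j = c k → V j ∩ V k = ∅))
    (htriv : ∃ (m : ℕ) (U : Fin m → Set (Quotient (MulAction.orbitRel G X))),
      (∀ i, IsOpen (U i)) ∧ (⋃ i, U i) = Set.univ ∧ ∀ i, Trivializing G X (U i)) :
    ∃ W : Fin (d + 1) → Set (Quotient (MulAction.orbitRel G X)),
      (∀ i, IsOpen (W i)) ∧ (⋃ i, W i) = Set.univ ∧ ∀ i, Trivializing G X (W i) := by
  obtain ⟨m, U, hUopen, hUcover, hUtriv⟩ := htriv
  obtain ⟨m', V, c, hVopen, hVcover, hVref, hVdisj⟩ := hdim m U hUopen hUcover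
  have hVtriv : ∀ j, Trivializing G X (V j) := fun j =>
    let ⟨i, hji⟩ := hVref j
    (hUtriv i).mono hji
  have hclass_disj : ∀ k, Pairwise (Disjoint on fun j : {j // c j = k} => V j) :=
    fun k j j' hjj' => Set.disjoint_iff_inter_eq_empty.2 <|
      hVdisj j j' (Subtype.coe_injective.ne hjj') (j.2.trans j'.2.symm)
  refine ⟨fun k => ⋃ j : {j // c j = k}, V j, fun k => isOpen_iUnion fun j => hVopen j, ?_,
    fun k => Trivializing.iUnion (fun j => hVopen j) (hclass_disj k) fun j => hVtriv j⟩
  rw [← hVcover]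
  ext q
  simp only [Set.mem_iUnion, Subtype.exists, exists_prop]
  exact ⟨fun ⟨_, j, _, hq⟩ => ⟨j, hq⟩, fun ⟨j, hq⟩ => ⟨c j, j, rfl, hq⟩⟩

/-- Let `G` be a compact Hausdorff group acting continuously and freely
on a compact Hausdorff space `X`.  If the covering dimension of `X/G` is at most `d`
(every finite open cover refines to a finite open cover splitting into `d+1` families of
pairwise disjoint sets), then the Schwarz genus of `X` is at most `d`:  given any finite
cover of `X/G` by trivializing open sets, `X/G` can be covered by at most `d+1`
trivializing open sets. -/
theorem genus_le_covering_dimension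
    (G : Type) [TopologicalSpace G] [Group G] [IsTopologicalGroup G] [CompactSpace G]
    [T2Space G]
    (X : Type) [TopologicalSpace X] [CompactSpace X] [T2Space X]
    [MulAction G X] [ContinuousSMul G X]
    (hfree : ∀ (g : G) (x : X), g • x = x → g = 1)
    (d : ℕ)
    (hdim : ∀ (m : ℕ) (U : Fin m → Set (Quotient (MulAction.orbitRel G X))),
      (∀ i, IsOpen (U i)) → (⋃ i, U i) = Set.univ →
      ∃ (m' : ℕ) (V : Fin m' → Set (Quotient (MulAction.orbitRel G X)))
        (c : Fin m' → Fin (d + 1)),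
        (∀ j, IsOpen (V j)) ∧ (⋃ j, V j) = Set.univ ∧
        (∀ j, ∃ i, V j ⊆ U i) ∧
        (∀ j k, j ≠ k → c j = c k → V j ∩ V k = ∅))
    (htriv : ∃ (m : ℕ) (U : Fin m → Set (Quotient (MulAction.orbitRel G X))),
      (∀ i, IsOpen (U i)) ∧ (⋃ i, U i) = Set.univ ∧ ∀ i, Trivializing G X (U i)) :
    ∃ W : Fin (d + 1) → Set (Quotient (MulAction.orbitRel G X)),
      (∀ i, IsOpen (W i)) ∧ (⋃ i, W i) = Set.univ ∧ ∀ i, Trivializing G X (W i) :=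
  genus_le_covering_dimension_general G X d hdim htriv
end
end

section
/- Let G be a compact Hausdorff group, X a compact Hausdorff space with a continuous G-action, and α the induced G-action on C(X). Then the G-index of X equals the local-triviality dimension of α: ind_G(X) = dim_LT(α). -/
noncomputable section

noncomputable section

/-- Points of the simplicial model of the `(n+1)`-fold join `E_n G = G ∗ ⋯ ∗ G`:
pairs `(t, g)` with `t` in the standard `n`-simplex. -/
def PreJoin (n : ℕ) (G : Type) [TopologicalSpace G] : Type :=
  {p : (Fin (n + 1) → ℝ) × (Fin (n + 1) → G) // (∀ i, 0 ≤ p.1 i) ∧ (∑ i, p.1 i) = 1}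

instance (n : ℕ) (G : Type) [TopologicalSpace G] : TopologicalSpace (PreJoin n G) := by
  unfold PreJoin; infer_instance

/-- The identification: the group coordinate `gᵢ` is irrelevant whenever `tᵢ = 0`. -/
def joinIdent (n : ℕ) (G : Type) [TopologicalSpace G] :
    PreJoin n G → PreJoin n G → Prop := fun p q =>
  p.val.1 = q.val.1 ∧ ∀ i, p.val.1 i ≠ 0 → p.val.2 i = q.val.2 i

/-- The `(n+1)`-fold topological join `E_n G = G ∗ ⋯ ∗ G` (simplicial model). -/
def EJoin (n : ℕ) (G : Type) [TopologicalSpace G] : Type := Quot (joinIdent n G)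

instance (n : ℕ) (G : Type) [TopologicalSpace G] : TopologicalSpace (EJoin n G) :=
  inferInstanceAs (TopologicalSpace (Quot _))

/-- The diagonal `G`-action on `E_n G` by left translation in each join factor. -/
def joinSMul (n : ℕ) {G : Type} [TopologicalSpace G] [Group G] (g : G) :
    EJoin n G → EJoin n G :=
  Quot.map (fun p => ⟨(p.val.1, fun i => g * p.val.2 i), p.property⟩)
    (fun p q h => ⟨h.1, fun i hi => by
      show g * p.val.2 i = g * q.val.2 i
      rw [h.2 i hi]⟩)

set_option synthInstance.maxHeartbeats 1000000
set_option maxHeartbeats 1000000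

/-- Left translation of a cone element by `g ∈ G`:
`F ↦ ((s, k) ↦ F s (g⁻¹ k))`, the `ℤ`-classical action of `G` on
`C₀((0,1]) ⊗ C(G) = C₀((0,1], C(G))`. -/
def coneLT {G : Type} [TopologicalSpace G] [CompactSpace G] [Group G] [IsTopologicalGroup G]
    (g : G) (F : coneIdeal C(G, ℂ)) : coneIdeal C(G, ℂ) :=
  ⟨ContinuousMap.comp
      ⟨fun φ : C(G, ℂ) => φ.comp ⟨fun k => g⁻¹ * k, by continuity⟩,
        ContinuousMap.continuous_precomp _⟩
      (F : C(unitInterval, C(G, ℂ))), by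
    simp only [mem_coneIdeal, ContinuousMap.comp_apply, ContinuousMap.coe_mk]
    rw [show (F : C(unitInterval, C(G, ℂ))) 0 = 0 from F.property]
    exact ContinuousMap.zero_comp _⟩

/-! An equivariant map `F : X → E_n G` yields `ρⱼ h = (x ↦ h (tⱼ (F x)) (gⱼ (F x)))`.
Conversely, the functions `tⱼ = ρⱼ (t ⊗ 1)` form a partition of unity, and where `tⱼ x ≠ 0`
the map `a ↦ ρⱼ (t ⊗ a) x / tⱼ x` is a character of `C(G)`, i.e. evaluation at a point `gⱼ x`.
The map `x ↦ [t x, g x]` into the join is continuous because `gⱼ` is continuous where `tⱼ ≠ 0`,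
and elsewhere is irrelevant, uniformly so by compactness of `G`. Equivariance on either side
comes from the translation invariance of `t ⊗ 1`. -/

section

-- Shortcut instances: finding these through `NonUnitalStarSubalgebra` is slow.
local instance {A : Type} [CStarAlgebra A] : Mul (coneIdeal A) := inferInstance
local instance {A : Type} [CStarAlgebra A] : NonUnitalNonAssocSemiring (coneIdeal A) :=
  inferInstance
local instance {A : Type} [CStarAlgebra A] : DistribMulAction ℂ (coneIdeal A) := inferInstance
local instance {A : Type} [CStarAlgebra A] : Star (coneIdeal A) := inferInstance

open Topology Filter

namespace PreJoin

variable {n : ℕ} {G : Type} [TopologicalSpace G]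

lemma coord_le_one (p : PreJoin n G) (j : Fin (n + 1)) : p.val.1 j ≤ 1 :=
  (Finset.single_le_sum (fun i _ => p.property.1 i) (Finset.mem_univ j)).trans_eq p.property.2

def weight (p : PreJoin n G) (j : Fin (n + 1)) : unitInterval :=
  ⟨p.val.1 j, p.property.1 j, p.coord_le_one j⟩

lemma continuous_weight (j : Fin (n + 1)) : Continuous fun p : PreJoin n G => p.weight j :=
  ((continuous_apply j).comp (continuous_fst.comp continuous_subtype_val)).subtype_mk _

lemma continuous_point (j : Fin (n + 1)) : Continuous fun p : PreJoin n G => p.val.2 j :=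
  (continuous_apply j).comp (continuous_snd.comp continuous_subtype_val)

end PreJoin

lemma EJoin.continuous_mk_comp {n : ℕ} {G : Type} [TopologicalSpace G] [CompactSpace G]
    {X : Type} [TopologicalSpace X] (q : X → PreJoin n G)
    (hweight : Continuous fun x => (q x).val.1)
    (hpoint : ∀ x j, (q x).val.1 j ≠ 0 → ContinuousAt (fun y => (q y).val.2 j) x) :
    Continuous fun x => (Quot.mk (joinIdent n G) (q x) : EJoin n G) := by
  refine continuous_iff_continuousAt.2 fun x₀ V hV => mem_map.2 ?_
  -- Freeing the coordinates whose weight vanishes at `x₀` does not move the point `[q x₀]`;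
  -- compactness of `G` makes the resulting neighbourhoods uniform in the free coordinates.
  let Φ : X × (Fin (n + 1) → G) → PreJoin n G := fun z =>
    ⟨((q z.1).val.1, fun j => if (q x₀).val.1 j = 0 then z.2 j else (q z.1).val.2 j),
      (q z.1).property⟩
  have hΦ : ∀ c, ContinuousAt Φ (x₀, c) := fun c => by
    refine Topology.IsInducing.subtypeVal.continuousAt_iff.2
      (hweight.continuousAt.comp continuousAt_fst |>.prodMk (continuousAt_pi.2 fun j => ?_))
    split_ifs with h
    · exact (continuous_apply j).continuousAt.comp continuousAt_snd
    · exact (hpoint x₀ j h).comp_of_eq continuousAt_fst rfl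
  have hΦ₀ : ∀ c, (Quot.mk _ (Φ (x₀, c)) : EJoin n G) = Quot.mk _ (q x₀) := fun c =>
    Quot.sound ⟨rfl, fun j hj => if_neg hj⟩
  have hnear : ∀ᶠ x in 𝓝 x₀, ∀ c ∈ Set.univ, (Quot.mk _ (Φ (x, c)) : EJoin n G) ∈ V :=
    isCompact_univ.eventually_forall_of_forall_eventually fun c _ =>
      (continuous_quot_mk.continuousAt.comp (hΦ c)) (by rwa [Function.comp_apply, hΦ₀ c])
  filter_upwards [hnear] with x hx
  have hΦq : Φ (x, (q x).val.2) = q x := Subtype.ext (Prod.ext rfl (funext fun j => ite_self _))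
  rw [Set.mem_preimage, ← hΦq]
  exact hx _ (Set.mem_univ _)

section JoinCoord

variable {n : ℕ} {G : Type} [TopologicalSpace G] [CompactSpace G]

def joinCoord (j : Fin (n + 1)) : coneIdeal C(G, ℂ) →⋆ₙₐ[ℂ] C(EJoin n G, ℂ) where
  toFun h :=
    ⟨Quot.lift (fun p => h.val (p.weight j) (p.val.2 j)) fun p q hpq => by
      by_cases hp : p.val.1 j = 0
      · have hq : q.val.1 j = 0 := hpq.1 ▸ hp
        rw [show p.weight j = 0 from Subtype.ext hp, show q.weight j = 0 from Subtype.ext hq,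
          h.property, ContinuousMap.zero_apply, ContinuousMap.zero_apply]
      · rw [show p.weight j = q.weight j from Subtype.ext (congrFun hpq.1 j), hpq.2 j hp],
    continuous_quot_lift _ <| continuous_eval.comp
      ((h.val.continuous.comp (PreJoin.continuous_weight j)).prodMk
        (PreJoin.continuous_point j))⟩
  map_add' _ _ := by ext e; induction e using Quot.ind; rfl
  map_zero' := by ext e; induction e using Quot.ind; rfl
  map_mul' _ _ := by ext e; induction e using Quot.ind; rfl
  map_smul' _ _ := by ext e; induction e using Quot.ind; rfl
  map_star' _ := by ext e; induction e using Quot.ind; rfl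

@[simp]
lemma joinCoord_mk (j : Fin (n + 1)) (h : coneIdeal C(G, ℂ)) (p : PreJoin n G) :
    joinCoord j h (Quot.mk _ p) = h.val (p.weight j) (p.val.2 j) := rfl

lemma joinCoord_coneLT_joinSMul [Group G] [IsTopologicalGroup G] (j : Fin (n + 1)) (g : G)
    (h : coneIdeal C(G, ℂ)) (e : EJoin n G) :
    joinCoord j (coneLT g h) (joinSMul n g e) = joinCoord j h e := by
  induction e using Quot.ind with
  | mk p => exact congrArg (h.val (p.weight j)) (inv_mul_cancel_left g (p.val.2 j))

lemma sum_joinCoord_coneElem_one :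
    ∑ j, joinCoord (n := n) (G := G) j (coneElem C(G, ℂ) 1) = 1 := by
  ext e
  rw [ContinuousMap.sum_apply, ContinuousMap.one_apply]
  induction e using Quot.ind with
  | mk p =>
    simp only [joinCoord_mk, coneElem, PreJoin.weight, ContinuousMap.coe_mk,
      ContinuousMap.smul_apply, ContinuousMap.one_apply, smul_eq_mul, mul_one]
    exact_mod_cast p.property.2

end JoinCoord

def ConeEquivariant {G : Type} [TopologicalSpace G] [Group G] [IsTopologicalGroup G]
    [CompactSpace G] {X : Type} [TopologicalSpace X] [MulAction G X] [ContinuousConstSMul G X]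
    (ρ : coneIdeal C(G, ℂ) →⋆ₙₐ[ℂ] C(X, ℂ)) : Prop :=
  ∀ (g : G) (F : coneIdeal C(G, ℂ)),
    ρ (coneLT g F) =
      ContinuousMap.compStarAlgHom' ℂ ℂ ⟨fun x : X => g⁻¹ • x, continuous_const_smul _⟩ (ρ F)

theorem exists_coneEquivariant_of_equivariant_map {n : ℕ} {G : Type} [TopologicalSpace G]
    [Group G] [IsTopologicalGroup G] [CompactSpace G] {X : Type} [TopologicalSpace X]
    [MulAction G X] [ContinuousConstSMul G X] (F : C(X, EJoin n G))
    (hF : ∀ (g : G) (x : X), F (g • x) = joinSMul n g (F x)) :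
    ∃ ρ : Fin (n + 1) → (coneIdeal C(G, ℂ) →⋆ₙₐ[ℂ] C(X, ℂ)),
      (∀ j, ConeEquivariant (ρ j)) ∧ ∑ j, ρ j (coneElem C(G, ℂ) 1) = 1 := by
  refine ⟨fun j => (ContinuousMap.compStarAlgHom' ℂ ℂ F).toNonUnitalStarAlgHom.comp (joinCoord j),
    fun j g h => ?_, ?_⟩
  · ext x
    change joinCoord j (coneLT g h) (F x) = joinCoord j h (F (g⁻¹ • x))
    rw [← smul_inv_smul g x, hF, inv_smul_smul, joinCoord_coneLT_joinSMul]
  · ext x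
    rw [ContinuousMap.sum_apply]
    change ∑ j, joinCoord j (coneElem C(G, ℂ) 1) (F x) = 1
    rw [← ContinuousMap.sum_apply, sum_joinCoord_coneElem_one, ContinuousMap.one_apply]

section Cone

variable {A : Type} [CStarAlgebra A]

variable (A) in
def sqrtCone : coneIdeal A :=
  ⟨⟨fun s => ((√(s : ℝ) : ℝ) : ℂ) • 1, by fun_prop⟩, by simp [mem_coneIdeal]⟩

lemma star_sqrtCone : star (sqrtCone A) = sqrtCone A := by
  apply Subtype.ext
  ext s
  simp [sqrtCone]

lemma sqrtCone_mul_self : sqrtCone A * sqrtCone A = coneElem A 1 := by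
  apply Subtype.ext
  ext s
  simp [sqrtCone, coneElem, smul_smul, Real.mul_self_sqrt s.2.1]

lemma coneElem_mul_coneElem (a b : A) :
    coneElem A a * coneElem A b = coneElem A (a * b) * coneElem A 1 := by
  apply Subtype.ext
  ext s
  simp [coneElem, smul_smul]

lemma coneElem_add_s16 (a b : A) : coneElem A (a + b) = coneElem A a + coneElem A b := by
  apply Subtype.ext
  ext s
  simp [coneElem]

lemma coneElem_zero : coneElem A 0 = 0 := by
  apply Subtype.ext
  ext s
  simp [coneElem]

lemma coneElem_smul_s16 (c : ℂ) (a : A) : coneElem A (c • a) = c • coneElem A a := by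
  apply Subtype.ext
  ext s
  simp [coneElem, smul_comm c]

end Cone

section ConePoint

variable {Y : Type} [TopologicalSpace Y] [CompactSpace Y] {X : Type} [TopologicalSpace X]
  (ρ : coneIdeal C(Y, ℂ) →⋆ₙₐ[ℂ] C(X, ℂ))

/-- `ρ (t ⊗ 1) x` (see `apply_coneElem_one`), written as the square of the real number
`ρ (√t ⊗ 1) x` to make its nonnegativity evident. -/
def coneWeight (x : X) : ℝ := (ρ (sqrtCone C(Y, ℂ)) x).re ^ 2

lemma continuous_coneWeight : Continuous (coneWeight ρ) := by
  have := map_continuous (ρ (sqrtCone C(Y, ℂ)))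
  unfold coneWeight
  fun_prop

lemma coneWeight_nonneg (x : X) : 0 ≤ coneWeight ρ x := sq_nonneg _

lemma apply_coneElem_one (x : X) : ρ (coneElem C(Y, ℂ) 1) x = coneWeight ρ x := by
  have hself : star (ρ (sqrtCone C(Y, ℂ)) x) = ρ (sqrtCone C(Y, ℂ)) x := by
    rw [← ContinuousMap.star_apply, ← map_star, star_sqrtCone]
  rw [← sqrtCone_mul_self, map_mul, ContinuousMap.mul_apply,
    ← Complex.conj_eq_iff_re.mp hself, coneWeight]
  push_cast
  ring

lemma sum_coneWeight_eq_one {n : ℕ} (ρ : Fin (n + 1) → (coneIdeal C(Y, ℂ) →⋆ₙₐ[ℂ] C(X, ℂ)))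
    (hsum : ∑ j, ρ j (coneElem C(Y, ℂ) 1) = 1) (x : X) : ∑ j, coneWeight (ρ j) x = 1 := by
  have := congrArg (· x) hsum
  simp only [ContinuousMap.sum_apply, apply_coneElem_one, ContinuousMap.one_apply] at this
  exact_mod_cast this

/-- Multiplicative because `(t ⊗ a) (t ⊗ b) = (t ⊗ ab) (t ⊗ 1)`. -/
def coneCharacter (x : X) (hx : coneWeight ρ x ≠ 0) : C(Y, ℂ) →ₐ[ℂ] ℂ where
  toFun a := ρ (coneElem C(Y, ℂ) a) x / coneWeight ρ x
  map_one' := by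
    rw [apply_coneElem_one]
    exact div_self (by exact_mod_cast hx)
  map_mul' a b := by
    have hmul : ρ (coneElem C(Y, ℂ) a) x * ρ (coneElem C(Y, ℂ) b) x =
        ρ (coneElem C(Y, ℂ) (a * b)) x * coneWeight ρ x := by
      rw [← apply_coneElem_one, ← ContinuousMap.mul_apply, ← ContinuousMap.mul_apply,
        ← map_mul, ← map_mul, coneElem_mul_coneElem]
    have hx' : (coneWeight ρ x : ℂ) ≠ 0 := by exact_mod_cast hx
    rw [div_mul_div_comm, hmul]
    field_simp
  map_zero' := by simp [coneElem_zero]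
  map_add' a b := by simp [coneElem_add_s16, add_div]
  commutes' c := by
    rw [Algebra.algebraMap_eq_smul_one, coneElem_smul_s16, map_smul, ContinuousMap.smul_apply,
      apply_coneElem_one, smul_eq_mul, mul_div_assoc, div_self (by exact_mod_cast hx), mul_one]
    rfl

variable [T2Space Y] [Nonempty Y]

def conePoint (x : X) : Y :=
  if hx : coneWeight ρ x ≠ 0 then
    (WeakDual.CharacterSpace.homeoEval Y ℂ).symm
      (WeakDual.CharacterSpace.equivAlgHom.symm (coneCharacter ρ x hx))
  else Classical.arbitrary Y

lemma conePoint_of_ne_zero {x : X} (hx : coneWeight ρ x ≠ 0) :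
    conePoint ρ x = (WeakDual.CharacterSpace.homeoEval Y ℂ).symm
      (WeakDual.CharacterSpace.equivAlgHom.symm (coneCharacter ρ x hx)) :=
  dif_pos hx

lemma apply_conePoint {x : X} (hx : coneWeight ρ x ≠ 0) (a : C(Y, ℂ)) :
    a (conePoint ρ x) = ρ (coneElem C(Y, ℂ) a) x / coneWeight ρ x := by
  rw [conePoint_of_ne_zero ρ hx]
  exact congrArg (· a) ((WeakDual.CharacterSpace.homeoEval Y ℂ).apply_symm_apply _)

lemma conePoint_eq_of_forall_apply {x : X} (hx : coneWeight ρ x ≠ 0) {y : Y}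
    (hy : ∀ a : C(Y, ℂ), a y = ρ (coneElem C(Y, ℂ) a) x / coneWeight ρ x) :
    conePoint ρ x = y :=
  (WeakDual.CharacterSpace.homeoEval Y ℂ).injective <| DFunLike.ext _ _ fun a =>
    (apply_conePoint ρ hx a).trans (hy a).symm

lemma continuousAt_conePoint {x : X} (hx : coneWeight ρ x ≠ 0) :
    ContinuousAt (conePoint ρ) x := by
  let U : Set X := {x | coneWeight ρ x ≠ 0}
  have hU : IsOpen U := isOpen_compl_singleton.preimage (continuous_coneWeight ρ)
  have hchar : Continuous fun u : U =>
      WeakDual.CharacterSpace.equivAlgHom.symm (coneCharacter ρ u.1 u.2) :=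
    (WeakDual.continuous_of_continuous_eval fun a =>
      ((map_continuous (ρ (coneElem C(Y, ℂ) a))).comp continuous_subtype_val).div
        (Complex.continuous_ofReal.comp ((continuous_coneWeight ρ).comp continuous_subtype_val))
        fun u => Complex.ofReal_ne_zero.2 u.2).subtype_mk _
  have hpoint : Continuous (U.domRestrict (conePoint ρ)) :=
    ((WeakDual.CharacterSpace.homeoEval Y ℂ).symm.continuous.comp hchar).congr fun u =>
      (conePoint_of_ne_zero ρ u.2).symm
  exact (continuousOn_iff_continuous_domRestrict.2 hpoint).continuousAt (hU.mem_nhds hx)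

end ConePoint

section Equivariant

variable {G : Type} [TopologicalSpace G] [Group G] [IsTopologicalGroup G] [CompactSpace G]

lemma coneLT_sqrtCone (g : G) : coneLT g (sqrtCone C(G, ℂ)) = sqrtCone C(G, ℂ) := by
  apply Subtype.ext
  ext s k
  simp [coneLT, sqrtCone]

lemma coneLT_coneElem (g : G) (a : C(G, ℂ)) :
    coneLT g (coneElem C(G, ℂ) a) =
      coneElem C(G, ℂ) (a.comp ⟨fun k => g⁻¹ * k, by fun_prop⟩) := by
  apply Subtype.ext
  ext s k
  simp [coneLT, coneElem]

variable {X : Type} [TopologicalSpace X] [MulAction G X] [ContinuousConstSMul G X]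
  {ρ : coneIdeal C(G, ℂ) →⋆ₙₐ[ℂ] C(X, ℂ)}

namespace ConeEquivariant

lemma apply_coneLT_smul (hρ : ConeEquivariant ρ) (g : G) (h : coneIdeal C(G, ℂ)) (x : X) :
    ρ (coneLT g h) (g • x) = ρ h x := by
  rw [hρ g h]
  exact congrArg (ρ h) (inv_smul_smul g x)

lemma coneWeight_smul (hρ : ConeEquivariant ρ) (g : G) (x : X) :
    coneWeight ρ (g • x) = coneWeight ρ x := by
  rw [coneWeight, ← coneLT_sqrtCone g, hρ.apply_coneLT_smul, coneWeight]

lemma conePoint_smul [T2Space G] (hρ : ConeEquivariant ρ) (g : G) {x : X}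
    (hx : coneWeight ρ x ≠ 0) : conePoint ρ (g • x) = g * conePoint ρ x := by
  refine conePoint_eq_of_forall_apply ρ (by rwa [hρ.coneWeight_smul]) fun a => ?_
  let b : C(G, ℂ) := a.comp ⟨fun k => g * k, by fun_prop⟩
  have hb : coneLT g (coneElem C(G, ℂ) b) = coneElem C(G, ℂ) a := by
    rw [coneLT_coneElem]
    congr 1
    ext k
    simp [b]
  change b (conePoint ρ x) = _
  rw [apply_conePoint ρ hx, ← hb, hρ.apply_coneLT_smul, hρ.coneWeight_smul]

end ConeEquivariant

theorem exists_equivariant_map_of_coneEquivariant [T2Space G] {n : ℕ}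
    (ρ : Fin (n + 1) → (coneIdeal C(G, ℂ) →⋆ₙₐ[ℂ] C(X, ℂ))) (hρ : ∀ j, ConeEquivariant (ρ j))
    (hsum : ∑ j, ρ j (coneElem C(G, ℂ) 1) = 1) :
    ∃ F : C(X, EJoin n G), ∀ (g : G) (x : X), F (g • x) = joinSMul n g (F x) := by
  let q : X → PreJoin n G := fun x =>
    ⟨(fun j => coneWeight (ρ j) x, fun j => conePoint (ρ j) x),
      fun j => coneWeight_nonneg (ρ j) x, sum_coneWeight_eq_one ρ hsum x⟩
  refine ⟨⟨fun x => Quot.mk _ (q x), EJoin.continuous_mk_comp q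
    (continuous_pi fun j => continuous_coneWeight (ρ j))
    fun x j hj => continuousAt_conePoint (ρ j) hj⟩, fun g x => Quot.sound ⟨?_, fun j hj => ?_⟩⟩
  · exact funext fun j => (hρ j).coneWeight_smul g x
  · exact (hρ j).conePoint_smul g (by rwa [← (hρ j).coneWeight_smul g])

end Equivariant

end

theorem G_index_eq_dimLT_general
    (G : Type) [TopologicalSpace G] [Group G] [IsTopologicalGroup G] [CompactSpace G]
    [T2Space G]
    (X : Type) [TopologicalSpace X]
    [MulAction G X] [ContinuousSMul G X] :
    sInf {d : ℕ∞ | ∃ n : ℕ, d = n ∧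
        ∃ F : C(X, EJoin n G), ∀ (g : G) (x : X), F (g • x) = joinSMul n g (F x)} =
      sInf {d : ℕ∞ | ∃ n : ℕ, d = n ∧
        ∃ ρ : Fin (n + 1) → (↥(coneIdeal C(G, ℂ)) →⋆ₙₐ[ℂ] C(X, ℂ)),
          (∀ (j : Fin (n + 1)) (g : G) (F : coneIdeal C(G, ℂ)),
            (ρ j) (coneLT g F) =
              ContinuousMap.compStarAlgHom' ℂ ℂ
                ⟨fun x : X => g⁻¹ • x, continuous_const_smul _⟩ ((ρ j) F)) ∧
          (∑ j, (ρ j) (coneElem C(G, ℂ) 1)) = 1} := by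
  congr 1
  ext d
  constructor
  · rintro ⟨n, rfl, F, hF⟩
    exact ⟨n, rfl, exists_coneEquivariant_of_equivariant_map F hF⟩
  · rintro ⟨n, rfl, ρ, hρ, hsum⟩
    exact ⟨n, rfl, exists_equivariant_map_of_coneEquivariant ρ hρ hsum⟩

/-- Let `G` be a compact Hausdorff group, `X` a compact Hausdorff space
with a continuous `G`-action, and `α` the induced `G`-action on `C(X)`.  Then the `G`-index
of `X` equals the local-triviality dimension of `α`:  `ind_G(X) = dim_LT(α)` (as values in
`ℕ∞`).

Here the `G`-index is the least `n` admitting a continuous `G`-equivariant map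
`X → E_n G`, and `dim_LT(α)` is the least `n` admitting `G`-equivariant *-homomorphisms
`ρ₀, …, ρₙ : C₀((0,1]) ⊗ C(G) → C(X)` with `∑ⱼ ρⱼ(t ⊗ 1) = 1`; equivariance is expressed
by intertwining the translation action on the cone with the action `f ↦ f(g⁻¹ • ·)` on
`C(X)`. -/
theorem G_index_eq_dimLT
    (G : Type) [TopologicalSpace G] [Group G] [IsTopologicalGroup G] [CompactSpace G]
    [T2Space G]
    (X : Type) [TopologicalSpace X] [CompactSpace X] [T2Space X]
    [MulAction G X] [ContinuousSMul G X] :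
    sInf {d : ℕ∞ | ∃ n : ℕ, d = n ∧
        ∃ F : C(X, EJoin n G), ∀ (g : G) (x : X), F (g • x) = joinSMul n g (F x)} =
      sInf {d : ℕ∞ | ∃ n : ℕ, d = n ∧
        ∃ ρ : Fin (n + 1) → (↥(coneIdeal C(G, ℂ)) →⋆ₙₐ[ℂ] C(X, ℂ)),
          (∀ (j : Fin (n + 1)) (g : G) (F : coneIdeal C(G, ℂ)),
            (ρ j) (coneLT g F) =
              ContinuousMap.compStarAlgHom' ℂ ℂ
                ⟨fun x : X => g⁻¹ • x, continuous_const_smul _⟩ ((ρ j) F)) ∧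
          (∑ j, (ρ j) (coneElem C(G, ℂ) 1)) = 1} :=
  G_index_eq_dimLT_general G X
end
end
end
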